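/- If T is a tree of order n ≥ 3 with maximum degree Δ(T), then tpc(T) = Δ(T) + 1. -/

import Mathlib

/-- Interleave two lists, starting with the first. -/
def List.interleaveTPC {α : Type*} : List α → List α → List α
  | [], ys => ys
  | x :: xs, ys => x :: List.interleaveTPC ys xs
termination_by xs ys => xs.length + ys.length

namespace SimpleGraph

variable {V : Type*} {α : Type*} {G : SimpleGraph V}

/-- The sequence of colors `cE e₀, cV v₁, cE e₁, cV v₂, …, cE e_{m-1}` of the edges and
internal vertices of a walk, in order. -/
def Walk.totalColorSeq (cV : V → α) (cE : Sym2 V → α) {u v : V} (p : G.Walk u v) : List α :=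
  (p.edges.map cE).interleaveTPC (p.support.tail.dropLast.map cV)

/-- A walk is total-proper if in its color sequence, any two entries at distance 1 or 2
are distinct.  This says exactly that adjacent edges get distinct colors, adjacent internal
vertices get distinct colors, and every internal vertex gets a color distinct from those of
its incident edges on the walk. -/
def Walk.IsTotalProper (cV : V → α) (cE : Sym2 V → α) {u v : V} (p : G.Walk u v) : Prop :=
  ∀ i a b, (p.totalColorSeq cV cE)[i]? = some a →
    ((p.totalColorSeq cV cE)[i + 1]? = some b ∨ (p.totalColorSeq cV cE)[i + 2]? = some b) →
    a ≠ b

/-- A total coloring (given by a vertex coloring `cV` and an edge coloring `cE`) makes `G`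
total-proper connected if every two distinct vertices are joined by a total-proper path. -/
def IsTPCColoring (G : SimpleGraph V) (cV : V → α) (cE : Sym2 V → α) : Prop :=
  ∀ u v : V, u ≠ v → ∃ p : G.Walk u v, p.IsPath ∧ p.IsTotalProper cV cE

/-- The total-proper connection number: the minimum number of colors in a total coloring
making `G` total-proper connected. -/
noncomputable def tpc (G : SimpleGraph V) : ℕ :=
  sInf {k | ∃ (cV : V → Fin k) (cE : Sym2 V → Fin k), G.IsTPCColoring cV cE}

end SimpleGraph

/-!
Lower bound: if `v` has maximum degree `Δ ≥ 2`, then for any two neighbors `a, b` of `v` the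
path `a v b` is the only `a`–`b` path of the tree, so it must be total-proper. Hence the `Δ` edges
at `v` get pairwise distinct colors, all different from the color of `v`.

Upper bound: a proper total coloring makes every path total-proper, and a forest of maximum
degree `< k`, `k ≥ 3`, has a proper total coloring with `k` colors. Delete a leaf edge `vu`,
color the rest by induction, give `vu` a color avoiding `u` and the `deg u - 1` other edges
at `u`, and give `v` a color avoiding `u` and `vu`.
-/

namespace List

variable {α : Type*}

def NeWithinTwo (l : List α) : Prop :=
  ∀ i a b, l[i]? = some a → (l[i + 1]? = some b ∨ l[i + 2]? = some b) → a ≠ b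

@[simp]
theorem neWithinTwo_nil : NeWithinTwo ([] : List α) := by
  simp [NeWithinTwo]

theorem mem_take_two_iff {b : α} {l : List α} : b ∈ l.take 2 ↔ l[0]? = some b ∨ l[1]? = some b := by
  rcases l with _ | ⟨x, _ | ⟨y, l⟩⟩ <;> simp [eq_comm]

theorem neWithinTwo_cons {a : α} {l : List α} :
    NeWithinTwo (a :: l) ↔ (∀ b ∈ l.take 2, a ≠ b) ∧ NeWithinTwo l := by
  constructor
  · exact fun h => ⟨fun b hb => h 0 a b rfl (mem_take_two_iff.mp hb),
      fun i x y hx hy => h (i + 1) x y hx hy⟩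
  · rintro ⟨hhead, htail⟩ (_ | i) x y hx hy
    · cases hx
      exact hhead y (mem_take_two_iff.mpr hy)
    · exact htail i x y hx hy

end List

namespace SimpleGraph

variable {V α : Type*} {G : SimpleGraph V} {cV : V → α} {cE : Sym2 V → α}

namespace Walk

variable (cV cE)

@[simp]
theorem totalColorSeq_nil {u : V} : (nil : G.Walk u u).totalColorSeq cV cE = [] := by
  simp [totalColorSeq, List.interleaveTPC]

@[simp]
theorem totalColorSeq_cons_nil {u v : V} (h : G.Adj u v) :
    (cons h nil).totalColorSeq cV cE = [cE s(u, v)] := by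
  simp [totalColorSeq, List.interleaveTPC]

@[simp]
theorem totalColorSeq_cons_cons {u v w x : V} (h : G.Adj u v) (h' : G.Adj v w) (p : G.Walk w x) :
    (cons h (cons h' p)).totalColorSeq cV cE
      = cE s(u, v) :: cV v :: (cons h' p).totalColorSeq cV cE := by
  have : (v :: p.support).dropLast = v :: p.support.dropLast := by
    cases hp : p.support with
    | nil => exact absurd hp p.support_ne_nil
    | cons a t => simp
  simp [totalColorSeq, this, List.interleaveTPC]

theorem eq_of_mem_take_one_totalColorSeq_cons {u v w : V} (h : G.Adj u v) (p : G.Walk v w)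
    {b : α} (hb : b ∈ ((cons h p).totalColorSeq cV cE).take 1) : b = cE s(u, v) := by
  cases p <;> simpa using hb

theorem eq_or_eq_of_mem_take_two_totalColorSeq_cons {u v w : V} (h : G.Adj u v)
    (p : G.Walk v w) {b : α} (hb : b ∈ ((cons h p).totalColorSeq cV cE).take 2) :
    b = cE s(u, v) ∨ b = cV v := by
  cases p <;> simp at hb <;> tauto

theorem isTotalProper_iff {u v : V} (p : G.Walk u v) :
    p.IsTotalProper cV cE ↔ (p.totalColorSeq cV cE).NeWithinTwo :=
  Iff.rfl

end Walk

structure IsProperTotalColoring (G : SimpleGraph V) (cV : V → α) (cE : Sym2 V → α) : Prop where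
  vertex_ne : ∀ ⦃u v⦄, G.Adj u v → cV u ≠ cV v
  vertex_ne_edge : ∀ ⦃u v⦄, G.Adj u v → cV u ≠ cE s(u, v)
  edge_ne : ∀ ⦃u v w⦄, G.Adj u v → G.Adj v w → u ≠ w → cE s(u, v) ≠ cE s(v, w)

namespace IsProperTotalColoring

theorem isTotalProper (hc : G.IsProperTotalColoring cV cE) {u v : V} {p : G.Walk u v}
    (hp : p.IsPath) : p.IsTotalProper cV cE := by
  rw [Walk.isTotalProper_iff]
  induction p with
  | nil => simp
  | @cons u v x h q ih =>
    cases q with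
    | nil => simp [List.neWithinTwo_cons]
    | @cons _ w _ h' r =>
      have huw : u ≠ w := by
        rintro rfl
        exact (Walk.cons_isPath_iff _ _).mp hp |>.2 (by simp)
      rw [Walk.totalColorSeq_cons_cons, List.neWithinTwo_cons, List.neWithinTwo_cons]
      refine ⟨fun b hb => ?_, fun b hb => ?_, ih hp.of_cons⟩
      · rw [List.take_succ_cons, List.mem_cons] at hb
        obtain rfl | hb := hb
        · rw [Sym2.eq_swap]
          exact (hc.vertex_ne_edge h.symm).symm
        · rw [Walk.eq_of_mem_take_one_totalColorSeq_cons cV cE h' r hb]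
          exact hc.edge_ne h h' huw
      · obtain rfl | rfl := Walk.eq_or_eq_of_mem_take_two_totalColorSeq_cons cV cE h' r hb
        · exact hc.vertex_ne_edge h'
        · exact hc.vertex_ne h'

theorem isTPCColoring (hc : G.IsProperTotalColoring cV cE) (hG : G.Preconnected) :
    G.IsTPCColoring cV cE := fun u v _ =>
  have ⟨p, hp⟩ := (hG u v).exists_isPath
  ⟨p, hp, hc.isTotalProper hp⟩

end IsProperTotalColoring

theorem Walk.isTotalProper_cons_cons_nil_iff {u v w : V} (h : G.Adj u v) (h' : G.Adj v w) :
    (cons h (cons h' nil)).IsTotalProper cV cE ↔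
      cE s(u, v) ≠ cV v ∧ cE s(u, v) ≠ cE s(v, w) ∧ cV v ≠ cE s(v, w) := by
  simp [isTotalProper_iff, List.neWithinTwo_cons, and_assoc]

/-- In a forest the path `u - v - w` is the only path from `u` to `w`, so it must be
total-proper. -/
theorem IsAcyclic.ne_of_isTPCColoring (hG : G.IsAcyclic) (hc : G.IsTPCColoring cV cE)
    {u v w : V} (h : G.Adj u v) (h' : G.Adj v w) (huw : u ≠ w) :
    cE s(u, v) ≠ cE s(v, w) ∧ cV v ≠ cE s(v, w) := by
  obtain ⟨p, hp, hpt⟩ := hc u w huw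
  have hq : (Walk.cons h (Walk.cons h' Walk.nil)).IsPath := by
    simp [Walk.cons_isPath_iff, h.ne, h'.ne, huw]
  obtain rfl : p = Walk.cons h (Walk.cons h' Walk.nil) :=
    congrArg Subtype.val ((hG.subsingleton_path u w).elim ⟨p, hp⟩ ⟨_, hq⟩)
  exact ((Walk.isTotalProper_cons_cons_nil_iff h h').mp hpt).2

theorem IsAcyclic.degree_lt_card_of_isTPCColoring [Fintype α] {v : V}
    [Fintype (G.neighborSet v)] (hG : G.IsAcyclic) (hc : G.IsTPCColoring cV cE)
    (hv : 2 ≤ G.degree v) : G.degree v < Fintype.card α := by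
  classical
  set edgeColors := (G.neighborFinset v).image fun w => cE s(v, w)
  have hinj : Set.InjOn (fun w => cE s(v, w)) (G.neighborFinset v) := by
    intro a ha b hb hab
    by_contra hne
    simp only [Finset.mem_coe, mem_neighborFinset] at ha hb
    refine (hG.ne_of_isTPCColoring hc ha.symm hb hne).1 ?_
    rwa [Sym2.eq_swap]
  have hnotMem : cV v ∉ edgeColors := by
    simp only [edgeColors, Finset.mem_image, mem_neighborFinset, not_exists, not_and]
    intro w hw hcw
    obtain ⟨a, ha, haw⟩ :=
      (G.neighborFinset v).exists_mem_ne (by rwa [card_neighborFinset_eq_degree]) w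
    exact (hG.ne_of_isTPCColoring hc ((mem_neighborFinset _ _ _).mp ha).symm hw haw).2 hcw.symm
  calc G.degree v < (insert (cV v) edgeColors).card := by
        rw [Finset.card_insert_of_notMem hnotMem, Finset.card_image_of_injOn hinj,
          card_neighborFinset_eq_degree]
        exact Nat.lt_succ_self _
    _ ≤ Fintype.card α := Finset.card_le_univ _

-- The first vertex of a longest path is a leaf.
theorem IsAcyclic.exists_adj_forall_adj_eq [Finite V] (hG : G.IsAcyclic) {a b : V}
    (hab : G.Adj a b) : ∃ v u, G.Adj v u ∧ ∀ w, G.Adj v w → w = u := by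
  have : Nonempty V := ⟨a⟩
  obtain ⟨v, x, p, hp, hmax⟩ := Walk.exists_isPath_forall_isPath_length_le_length G
  have hnil : ¬p.Nil := by
    have := hmax a b (Walk.cons hab Walk.nil) (by simp [hab.ne])
    rw [← Walk.length_eq_zero_iff]
    simp at this
    omega
  refine ⟨v, p.snd, p.adj_snd hnil, fun w hw => hG.eq_snd_of_adj_start hp hw ?_⟩
  by_contra hwp
  have := hmax w x (Walk.cons hw.symm p) (hp.cons hwp)
  simp at this

theorem IsProperTotalColoring.update_leaf [DecidableEq V] {u v : V}
    (hc : (G.deleteEdges {s(v, u)}).IsProperTotalColoring cV cE) (hvu : G.Adj v u)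
    (hleaf : ∀ w, G.Adj v w → w = u) {c₀ c₁ : α}
    (h₀ : ∀ w, G.Adj u w → w ≠ v → cE s(u, w) ≠ c₀) (h₀u : cV u ≠ c₀) (h₁u : cV u ≠ c₁)
    (h₁₀ : c₀ ≠ c₁) :
    G.IsProperTotalColoring (Function.update cV v c₁) (Function.update cE s(v, u) c₀) := by
  have huv : u ≠ v := hvu.ne'
  have hdel : ∀ ⦃x y⦄, G.Adj x y → s(x, y) ≠ s(v, u) → (G.deleteEdges {s(v, u)}).Adj x y :=
    fun x y hxy hne => by simp [hxy, hne]
  have hedge : ∀ ⦃x y⦄, G.Adj x y → s(x, y) ≠ s(v, u) → x ≠ v ∧ y ≠ v := by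
    refine fun x y hxy hne => ⟨?_, ?_⟩ <;> rintro rfl
    · exact hne (by rw [hleaf y hxy])
    · exact hne (by rw [hleaf x hxy.symm, Sym2.eq_swap])
  constructor
  · intro x y hxy
    by_cases hne : s(x, y) = s(v, u)
    · rcases Sym2.eq_iff.mp hne with ⟨rfl, rfl⟩ | ⟨rfl, rfl⟩
      · simpa [huv] using h₁u.symm
      · simpa [huv] using h₁u
    · obtain ⟨hx, hy⟩ := hedge hxy hne
      simpa [hx, hy] using hc.vertex_ne (hdel hxy hne)
  · intro x y hxy
    by_cases hne : s(x, y) = s(v, u)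
    · rcases Sym2.eq_iff.mp hne with ⟨rfl, rfl⟩ | ⟨rfl, rfl⟩
      · simpa using h₁₀.symm
      · simpa [huv, Sym2.eq_swap] using h₀u
    · simpa [(hedge hxy hne).1, hne] using hc.vertex_ne_edge (hdel hxy hne)
  · intro x y z hxy hyz hxz
    have hy : y ≠ v := by
      rintro rfl
      exact hxz (by rw [hleaf x hxy.symm, hleaf z hyz])
    by_cases hne₁ : s(x, y) = s(v, u)
    · obtain ⟨rfl, rfl⟩ : v = x ∧ u = y := by grind [Sym2.eq_iff]
      have hz : z ≠ v := fun h => hxz h.symm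
      simpa [Sym2.eq_iff, hz, huv] using (h₀ z hyz hz).symm
    by_cases hne₂ : s(y, z) = s(v, u)
    · obtain ⟨rfl, rfl⟩ : u = y ∧ v = z := by grind [Sym2.eq_iff]
      have hx : x ≠ v := hxz
      simpa [Sym2.eq_iff, hx, huv, Sym2.eq_swap] using h₀ x hxy.symm hx
    · simpa [hne₁, hne₂] using hc.edge_ne (hdel hxy hne₁) (hdel hyz hne₂) hxz

theorem IsProperTotalColoring.exists_of_deleteEdges [Fintype α] {u v : V}
    [Fintype (G.neighborSet u)] (hc : (G.deleteEdges {s(v, u)}).IsProperTotalColoring cV cE)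
    (hvu : G.Adj v u) (hleaf : ∀ w, G.Adj v w → w = u) (hα : 3 ≤ Fintype.card α)
    (hu : G.degree u < Fintype.card α) :
    ∃ (cV' : V → α) (cE' : Sym2 V → α), G.IsProperTotalColoring cV' cE' := by
  classical
  set avoid := insert (cV u) (((G.neighborFinset u).erase v).image fun w => cE s(u, w))
  have havoid : avoid.card < Fintype.card α :=
    calc avoid.card ≤ ((G.neighborFinset u).erase v).card + 1 :=
          (Finset.card_insert_le _ _).trans (by gcongr; exact Finset.card_image_le)
      _ = G.degree u := by
          rw [Finset.card_erase_add_one (by simpa using hvu.symm), card_neighborFinset_eq_degree]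
      _ < Fintype.card α := hu
  obtain ⟨c₀, -, hc₀⟩ := Finset.exists_mem_notMem_of_card_lt_card (t := Finset.univ) havoid
  obtain ⟨c₁, -, hc₁⟩ := Finset.exists_mem_notMem_of_card_lt_card
    (s := {cV u, c₀}) (t := Finset.univ) (Finset.card_le_two.trans_lt hα)
  refine ⟨_, _, hc.update_leaf hvu hleaf (c₀ := c₀) (c₁ := c₁) ?_ ?_ ?_ ?_⟩
  · intro w huw hwv hw
    exact hc₀ (Finset.mem_insert_of_mem (Finset.mem_image.mpr ⟨w, by simp [hwv, huw], hw⟩))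
  · exact fun h => hc₀ (h ▸ Finset.mem_insert_self _ _)
  · exact fun h => hc₁ (by simp [h])
  · exact fun h => hc₁ (by simp [h])

theorem IsAcyclic.exists_isProperTotalColoring [Fintype V] [DecidableRel G.Adj] [Fintype α]
    (hG : G.IsAcyclic) (hα : 3 ≤ Fintype.card α) (hdeg : ∀ v, G.degree v < Fintype.card α) :
    ∃ (cV : V → α) (cE : Sym2 V → α), G.IsProperTotalColoring cV cE := by
  classical
  -- The induction runs over all subgraphs, so degrees must not depend on a fixed instance.
  suffices ∀ H : SimpleGraph V, H.IsAcyclic → (∀ v, H.degree v < Fintype.card α) →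
      ∃ (cV : V → α) (cE : Sym2 V → α), H.IsProperTotalColoring cV cE from
    this G hG fun v => by convert hdeg v
  intro H
  induction H using WellFoundedLT.induction with
  | _ H ih =>
  intro hH hdeg
  by_cases hbot : H = ⊥
  · have : Nonempty α := Fintype.card_pos_iff.mp (by omega)
    subst hbot
    exact ⟨fun _ => Classical.arbitrary α, fun _ => Classical.arbitrary α,
      by constructor <;> simp⟩
  obtain ⟨a, b, hab⟩ : ∃ a b, H.Adj a b := by
    by_contra! h
    exact hbot (by ext; simp [h])
  obtain ⟨v, u, hvu, hleaf⟩ := hH.exists_adj_forall_adj_eq hab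
  have hlt : H.deleteEdges {s(v, u)} < H :=
    lt_of_le_of_ne (deleteEdges_le _) fun h => by
      simpa using (h.symm ▸ hvu : (H.deleteEdges {s(v, u)}).Adj v u)
  obtain ⟨cV, cE, hc⟩ := ih _ hlt (hH.anti (deleteEdges_le _))
    fun w => by convert (degree_le_of_le (deleteEdges_le _)).trans_lt (hdeg w)
  exact hc.exists_of_deleteEdges hvu hleaf hα (hdeg u)

theorem IsTree.two_le_maxDegree [Fintype V] [DecidableRel G.Adj] (hG : G.IsTree)
    (hcard : 3 ≤ Fintype.card V) : 2 ≤ G.maxDegree := by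
  classical
  by_contra! h
  have hsum : ∑ v, G.degree v ≤ ∑ _v : V, 1 :=
    Finset.sum_le_sum fun v _ => Nat.le_of_lt_succ ((G.degree_le_maxDegree v).trans_lt h)
  rw [sum_degrees_eq_twice_card_edges, Finset.sum_const, Finset.card_univ, smul_eq_mul,
    mul_one] at hsum
  have := hG.card_edgeFinset
  omega

end SimpleGraph

open SimpleGraph in
theorem tpc_tree {V : Type*} [Fintype V] (T : SimpleGraph V)
    [DecidableRel T.Adj] (hT : T.IsTree) (h3 : 3 ≤ Fintype.card V) :
    T.tpc = T.maxDegree + 1 := by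
  have hΔ : 2 ≤ T.maxDegree := hT.two_le_maxDegree h3
  obtain ⟨cV, cE, hc⟩ := hT.isAcyclic.exists_isProperTotalColoring (α := Fin (T.maxDegree + 1))
    (by simpa using hΔ) fun v => by simpa using Nat.lt_succ_of_le (T.degree_le_maxDegree v)
  have hmem : T.maxDegree + 1 ∈
      {k | ∃ (cV : V → Fin k) (cE : Sym2 V → Fin k), T.IsTPCColoring cV cE} :=
    ⟨cV, cE, hc.isTPCColoring hT.connected.preconnected⟩
  refine le_antisymm (Nat.sInf_le hmem) (le_csInf ⟨_, hmem⟩ ?_)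
  rintro k ⟨cV, cE, hc⟩
  have := hT.connected.nonempty
  obtain ⟨v, hv⟩ := T.exists_maximal_degree_vertex
  simpa [hv] using hT.isAcyclic.degree_lt_card_of_isTPCColoring hc (hv ▸ hΔ)
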